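/- arXiv:2508.10879 — 2 statements merged into one kernel-verified Lean document; each statement's English description precedes it below -/
import Mathlib

section
/- Let X be a d×d real symmetric PSD matrix with eigenvalues λ_1 ≥ … ≥ λ_d, eigengap Δ_k := λ_k − λ_{k+1}, and let V ∈ ℝ^{d×k} have as columns orthonormal eigenvectors for the k largest eigenvalues of X. Then for every U ∈ ℝ^{d×k} with orthonormal columns, (Δ_k/2)·‖U Uᵀ − V Vᵀ‖_F² ≤ Tr(V Vᵀ X) − Tr(U Uᵀ X). -/
open Matrix

/-- Squared Frobenius norm of a real matrix. -/
noncomputable def frobSq {m n : ℕ} (A : Matrix (Fin m) (Fin n) ℝ) : ℝ :=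
  ∑ i, ∑ j, (A i j) ^ 2

lemma sum_ite_lt_eq {d k : ℕ} (hkd : k ≤ d) (f : Fin d → ℝ) :
    ∑ i : Fin d, (if (i : ℕ) < k then f i else 0) = ∑ j : Fin k, f (Fin.castLE hkd j) := by
  rw [← Finset.sum_filter]
  have h := Finset.sum_map Finset.univ (Fin.castLEEmb hkd) f
  simp only [Fin.castLEEmb_apply] at h
  rw [← h]
  congr 1
  ext i
  simp only [Finset.mem_filter, Finset.mem_map, Finset.mem_univ, true_and,
    Fin.castLEEmb_apply]
  constructor
  · intro hi; exact ⟨⟨i, hi⟩, rfl⟩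
  · rintro ⟨j, rfl⟩; simp [j.isLt]

lemma frobSq_eq_trace {m n : ℕ} (A : Matrix (Fin m) (Fin n) ℝ) :
    frobSq A = (Aᵀ * A).trace := by
  simp only [frobSq, Matrix.trace, Matrix.diag, Matrix.mul_apply, Matrix.transpose_apply, sq]
  rw [Finset.sum_comm]

/-- **Frobenius distance vs. trace gap.**
Let `X` be `d × d` symmetric PSD with eigenvalues `μ 0 ≥ … ≥ μ (d-1)` (via an
orthogonal eigendecomposition with nonincreasing, nonnegative `μ`), eigengap
`Δ_k = μ (k-1) - μ k` (0-based), and let `V` consist of orthonormal eigenvectors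
for the `k` largest eigenvalues (the first `k` columns of `Q`).  Then for every
`U` with orthonormal columns,
`(Δ_k / 2) ‖U Uᵀ - V Vᵀ‖_F² ≤ Tr(V Vᵀ X) - Tr(U Uᵀ X)`. -/
theorem frobenius_le_trace_gap {d k : ℕ} (hk1 : 1 ≤ k) (hkd : k < d)
    (X Q : Matrix (Fin d) (Fin d) ℝ) (μ : Fin d → ℝ)
    (hQ : Qᵀ * Q = 1) (hdecomp : X = Q * Matrix.diagonal μ * Qᵀ)
    (hmono : ∀ i j : Fin d, i ≤ j → μ j ≤ μ i)
    (hpos : ∀ i, 0 ≤ μ i)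
    (V : Matrix (Fin d) (Fin k) ℝ)
    (hV : ∀ (i : Fin d) (j : Fin k), V i j = Q i (Fin.castLE hkd.le j)) :
    ∀ U : Matrix (Fin d) (Fin k) ℝ, Uᵀ * U = 1 →
      (μ ⟨k - 1, by omega⟩ - μ ⟨k, hkd⟩) / 2 * frobSq (U * Uᵀ - V * Vᵀ) ≤
        (V * Vᵀ * X).trace - (U * Uᵀ * X).trace := by
  intro U hU
  have hk1' : k - 1 < d := by omega
  show (μ ⟨k - 1, hk1'⟩ - μ ⟨k, hkd⟩) / 2 * frobSq (U * Uᵀ - V * Vᵀ) ≤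
        (V * Vᵀ * X).trace - (U * Uᵀ * X).trace
  set a := μ ⟨k - 1, hk1'⟩ with ha
  set b := μ ⟨k, hkd⟩ with hb
  have hQQT : Q * Qᵀ = 1 := mul_eq_one_comm.mp hQ
  set W : Matrix (Fin d) (Fin k) ℝ := Qᵀ * U with hWdef
  set s : Fin d → ℝ := fun i => ∑ j, (W i j) ^ 2 with hs
  -- orthonormality of W
  have hWW : Wᵀ * W = 1 := by
    rw [hWdef, transpose_mul, transpose_transpose, Matrix.mul_assoc,
      ← Matrix.mul_assoc Q Qᵀ U, hQQT, Matrix.one_mul, hU]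
  have hPdiag : ∀ i, (W * Wᵀ) i i = s i := by
    intro i; simp [Matrix.mul_apply, hs, sq]
  have hs0 : ∀ i, 0 ≤ s i := fun i => Finset.sum_nonneg fun j _ => sq_nonneg _
  have hP : (W * Wᵀ) * (W * Wᵀ) = W * Wᵀ := by
    rw [Matrix.mul_assoc, ← Matrix.mul_assoc Wᵀ W Wᵀ, hWW, Matrix.one_mul]
  have hPsym : (W * Wᵀ)ᵀ = W * Wᵀ := by
    rw [transpose_mul, transpose_transpose]
  have hs1 : ∀ i, s i ≤ 1 := by
    intro i
    have hNN : (1 - W * Wᵀ) * (1 - W * Wᵀ) = 1 - W * Wᵀ := by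
      rw [Matrix.sub_mul, Matrix.one_mul, Matrix.mul_sub, Matrix.mul_one, hP]
      abel
    have hkey : (1 - W * Wᵀ : Matrix (Fin d) (Fin d) ℝ) i i = ∑ j, ((1 - W * Wᵀ : Matrix (Fin d) (Fin d) ℝ) i j) ^ 2 := by
      conv_lhs => rw [← hNN]
      rw [Matrix.mul_apply]
      refine Finset.sum_congr rfl fun j _ => ?_
      have : (1 - W * Wᵀ : Matrix (Fin d) (Fin d) ℝ) j i = (1 - W * Wᵀ : Matrix (Fin d) (Fin d) ℝ) i j := by
        have := congrFun (congrFun hPsym j) i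
        simp only [Matrix.transpose_apply] at this
        simp [Matrix.sub_apply, Matrix.one_apply, ← this, eq_comm]
      rw [this]; ring
    have h0 : 0 ≤ (1 - W * Wᵀ : Matrix (Fin d) (Fin d) ℝ) i i := by
      rw [hkey]; exact Finset.sum_nonneg fun j _ => sq_nonneg _
    have : (1 - W * Wᵀ : Matrix (Fin d) (Fin d) ℝ) i i = 1 - s i := by
      simp [Matrix.sub_apply, Matrix.one_apply_eq, hPdiag i]
    linarith [this ▸ h0]
  -- total sum of s
  have hsum : ∑ i, s i = (k : ℝ) := by
    have h1 : ∑ i, s i = ∑ j : Fin k, ∑ i : Fin d, (W i j) ^ 2 := by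
      simp only [hs]; rw [Finset.sum_comm]
    have h2 : ∀ j : Fin k, ∑ i : Fin d, (W i j) ^ 2 = 1 := by
      intro j
      have := congrFun (congrFun hWW j) j
      simp only [Matrix.mul_apply, Matrix.transpose_apply, Matrix.one_apply_eq] at this
      rw [← this]
      exact Finset.sum_congr rfl fun i _ => (sq (W i j)).symm ▸ by ring
    rw [h1]; simp [h2]
  -- generic trace formula
  have htr : ∀ Y : Matrix (Fin d) (Fin k) ℝ,
      (Y * Yᵀ * X).trace = ∑ i, μ i * ∑ j, ((Qᵀ * Y) i j) ^ 2 := by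
    intro Y
    have h1 : Y * Yᵀ * X = (Y * (Yᵀ * (Q * (Matrix.diagonal μ * Qᵀ)))) := by
      rw [hdecomp]; simp only [Matrix.mul_assoc]
    have h1' : Y * (Yᵀ * (Q * (Matrix.diagonal μ * Qᵀ)))
        = (Y * (Yᵀ * (Q * Matrix.diagonal μ))) * Qᵀ := by
      simp only [Matrix.mul_assoc]
    rw [h1, h1', Matrix.trace_mul_comm]
    have h2 : Qᵀ * (Y * (Yᵀ * (Q * Matrix.diagonal μ)))
        = ((Qᵀ * Y) * (Qᵀ * Y)ᵀ) * Matrix.diagonal μ := by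
      simp only [Matrix.transpose_mul, Matrix.transpose_transpose, Matrix.mul_assoc]
    rw [h2]
    have h3 : ∀ i, (((Qᵀ * Y) * (Qᵀ * Y)ᵀ) * Matrix.diagonal μ) i i
        = μ i * ∑ j, ((Qᵀ * Y) i j) ^ 2 := by
      intro i
      rw [Matrix.mul_diagonal, mul_comm]
      congr 1
      rw [Matrix.mul_apply]
      exact Finset.sum_congr rfl fun j _ => by rw [Matrix.transpose_apply, sq]
    simp only [Matrix.trace, Matrix.diag]
    exact Finset.sum_congr rfl fun i _ => h3 i
  have hTrU : (U * Uᵀ * X).trace = ∑ i, μ i * s i := htr U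
  -- entries of Qᵀ V
  have hWv : ∀ (i : Fin d) (j : Fin k),
      (Qᵀ * V) i j = if i = Fin.castLE hkd.le j then 1 else 0 := by
    intro i j
    have h1 : (Qᵀ * V) i j = (Qᵀ * Q) i (Fin.castLE hkd.le j) := by
      rw [Matrix.mul_apply, Matrix.mul_apply]
      exact Finset.sum_congr rfl fun l _ => by rw [hV]
    rw [h1, hQ, Matrix.one_apply]
  have hsV : ∀ i : Fin d, ∑ j, ((Qᵀ * V) i j) ^ 2 = if (i : ℕ) < k then 1 else 0 := by
    intro i
    by_cases h : (i : ℕ) < k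
    · rw [if_pos h]
      have hterm : ∀ j : Fin k, ((Qᵀ * V) i j) ^ 2 = if j = ⟨(i : ℕ), h⟩ then (1:ℝ) else 0 := by
        intro j
        rw [hWv i j]
        by_cases hj : j = ⟨(i : ℕ), h⟩
        · subst hj
          rw [if_pos (by ext; rfl), if_pos rfl]; norm_num
        · rw [if_neg, if_neg hj]
          · norm_num
          · intro hi; exact hj (by ext; exact (congrArg Fin.val hi).symm)
      rw [Finset.sum_congr rfl fun j _ => hterm j]
      simp
    · rw [if_neg h]
      refine Finset.sum_eq_zero fun j _ => ?_
      rw [hWv i j, if_neg, zero_pow two_ne_zero]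
      intro hi; exact h (by rw [hi]; exact j.isLt)
  have hTrV : (V * Vᵀ * X).trace = ∑ i : Fin d, (if (i : ℕ) < k then μ i else 0) := by
    rw [htr V]
    refine Finset.sum_congr rfl fun i _ => ?_
    rw [hsV i]; split_ifs <;> simp
  -- orthonormality of V
  have hVV : Vᵀ * V = 1 := by
    ext j l
    have h1 : (Vᵀ * V) j l = (Qᵀ * Q) (Fin.castLE hkd.le j) (Fin.castLE hkd.le l) := by
      rw [Matrix.mul_apply, Matrix.mul_apply]
      refine Finset.sum_congr rfl fun i _ => ?_
      rw [Matrix.transpose_apply, Matrix.transpose_apply, hV, hV]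
    rw [h1, hQ, Matrix.one_apply, Matrix.one_apply]
    by_cases hjl : j = l
    · subst hjl; simp
    · rw [if_neg (fun hc : Fin.castLE hkd.le j = Fin.castLE hkd.le l => hjl (Fin.castLE_injective hkd.le hc)), if_neg hjl]
  -- cross trace term
  have hcross : (U * Uᵀ * (V * Vᵀ)).trace = ∑ j : Fin k, s (Fin.castLE hkd.le j) := by
    have h1 : U * Uᵀ * (V * Vᵀ) = (U * (Uᵀ * V)) * Vᵀ := by
      simp only [Matrix.mul_assoc]
    rw [h1, Matrix.trace_mul_comm]
    have h2 : Vᵀ * (U * (Uᵀ * V)) = (Vᵀ * U) * (Vᵀ * U)ᵀ := by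
      simp only [Matrix.transpose_mul, Matrix.transpose_transpose, Matrix.mul_assoc]
    rw [h2]
    have hM : ∀ (j l : Fin k), (Vᵀ * U) j l = W (Fin.castLE hkd.le j) l := by
      intro j l
      rw [hWdef, Matrix.mul_apply, Matrix.mul_apply]
      refine Finset.sum_congr rfl fun i _ => ?_
      rw [Matrix.transpose_apply, Matrix.transpose_apply, hV]
    have h4 : ((Vᵀ * U) * (Vᵀ * U)ᵀ).trace = ∑ j, ∑ l, ((Vᵀ * U) j l) ^ 2 := by
      simp only [Matrix.trace, Matrix.diag]
      refine Finset.sum_congr rfl fun j _ => ?_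
      rw [Matrix.mul_apply]
      exact Finset.sum_congr rfl fun l _ => by rw [Matrix.transpose_apply, sq]
    rw [h4]
    refine Finset.sum_congr rfl fun j _ => ?_
    rw [hs]
    exact Finset.sum_congr rfl fun l _ => by rw [hM]
  -- translate the Fin k sum to an indicator sum
  have hTT : ∑ j : Fin k, s (Fin.castLE hkd.le j)
      = ∑ i : Fin d, (if (i : ℕ) < k then s i else 0) := (sum_ite_lt_eq hkd.le s).symm
  have hK : ∑ i : Fin d, (if (i : ℕ) < k then (1:ℝ) else 0) = (k : ℝ) := by
    rw [sum_ite_lt_eq hkd.le (fun _ => (1:ℝ))]; simp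
  -- Frobenius norm expansion
  have hfrob : frobSq (U * Uᵀ - V * Vᵀ)
      = 2 * (k : ℝ) - 2 * ∑ i : Fin d, (if (i : ℕ) < k then s i else 0) := by
    rw [frobSq_eq_trace]
    have hAT : (U * Uᵀ - V * Vᵀ)ᵀ = U * Uᵀ - V * Vᵀ := by
      rw [Matrix.transpose_sub, Matrix.transpose_mul, Matrix.transpose_mul,
        Matrix.transpose_transpose, Matrix.transpose_transpose]
    rw [hAT]
    have hexp : (U * Uᵀ - V * Vᵀ) * (U * Uᵀ - V * Vᵀ)
        = U * Uᵀ * (U * Uᵀ) - U * Uᵀ * (V * Vᵀ) - V * Vᵀ * (U * Uᵀ) + V * Vᵀ * (V * Vᵀ) := by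
      rw [Matrix.sub_mul, Matrix.mul_sub, Matrix.mul_sub]; abel
    rw [hexp, Matrix.trace_add, Matrix.trace_sub, Matrix.trace_sub]
    have hUU : U * Uᵀ * (U * Uᵀ) = U * Uᵀ := by
      rw [Matrix.mul_assoc, ← Matrix.mul_assoc Uᵀ U Uᵀ, hU, Matrix.one_mul]
    have hVV2 : V * Vᵀ * (V * Vᵀ) = V * Vᵀ := by
      rw [Matrix.mul_assoc, ← Matrix.mul_assoc Vᵀ V Vᵀ, hVV, Matrix.one_mul]
    have htU : (U * Uᵀ).trace = (k : ℝ) := by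
      rw [Matrix.trace_mul_comm, hU, Matrix.trace_one]; simp
    have htV : (V * Vᵀ).trace = (k : ℝ) := by
      rw [Matrix.trace_mul_comm, hVV, Matrix.trace_one]; simp
    have hc2 : (V * Vᵀ * (U * Uᵀ)).trace = (U * Uᵀ * (V * Vᵀ)).trace :=
      Matrix.trace_mul_comm _ _
    rw [hUU, hVV2, htU, htV, hc2, hcross, hTT]
    ring
  -- final arithmetic
  have hg : ∀ i : Fin d, (0:ℝ) ≤
      (if (i : ℕ) < k then (μ i - a) * (1 - s i) else (b - μ i) * s i) := by
    intro i
    split_ifs with h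
    · have hai : a ≤ μ i := by
        apply hmono
        rw [Fin.le_def]
        show (i : ℕ) ≤ k - 1
        omega
      have h1 := hs1 i
      nlinarith
    · have hbi : μ i ≤ b := by
        apply hmono
        rw [Fin.le_def]
        show k ≤ (i : ℕ)
        omega
      have h1 := hs0 i
      nlinarith
  have hper : ∀ i : Fin d,
      (if (i : ℕ) < k then (μ i - a) * (1 - s i) else (b - μ i) * s i)
      = (if (i : ℕ) < k then μ i else 0) - μ i * s i
        + (a - b) * (if (i : ℕ) < k then s i else 0) + b * s i
        - a * (if (i : ℕ) < k then (1:ℝ) else 0) := by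
    intro i; split_ifs with h <;> ring
  have h0 : (0:ℝ) ≤ ∑ i : Fin d, (if (i : ℕ) < k then (μ i - a) * (1 - s i) else (b - μ i) * s i) :=
    Finset.sum_nonneg fun i _ => hg i
  rw [Finset.sum_congr rfl fun i _ => hper i, Finset.sum_sub_distrib, Finset.sum_add_distrib,
    Finset.sum_add_distrib, Finset.sum_sub_distrib, ← Finset.mul_sum, ← Finset.mul_sum,
    ← Finset.mul_sum, hsum, hK] at h0
  rw [hfrob, hTrV, hTrU]
  linarith
end

section
/- Let A and B be independent d×d real random matrices such that A B Aᵀ, A Aᵀ and B are integrable, and suppose B is symmetric almost surely. Then E[A B Aᵀ] ⪯ ‖E[B]‖₂ · E[A Aᵀ] in the Loewner order. -/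
open Matrix MeasureTheory ProbabilityTheory
open scoped Matrix.Norms.L2Operator RealInnerProductSpace

/-- Matrices inherit the (Borel/pi) measurable-space structure of functions. -/
noncomputable instance matrixMeasurableSpace {m n α : Type*} [MeasurableSpace α] :
    MeasurableSpace (Matrix m n α) :=
  (inferInstance : MeasurableSpace (m → n → α))

section Aux

variable {d : ℕ} {Ω : Type*} [MeasurableSpace Ω] {μ : Measure Ω}

/-- Expansion of the quadratic form as a double sum. -/
lemma quad_expand (N : Matrix (Fin d) (Fin d) ℝ) (x : Fin d → ℝ) :
    x ⬝ᵥ N *ᵥ x = ∑ i, ∑ j, x i * N i j * x j := by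
  simp [dotProduct, mulVec, Finset.mul_sum, mul_assoc]

/-- Quadratic form of an entrywise-expectation matrix is the expectation of
the quadratic form. -/
lemma dot_integral (μ : Measure Ω) (M : Ω → Matrix (Fin d) (Fin d) ℝ)
    (hint : ∀ i j, Integrable (fun ω => M ω i j) μ) (x : Fin d → ℝ) :
    x ⬝ᵥ (Matrix.of fun i j => ∫ ω, M ω i j ∂μ) *ᵥ x
      = ∫ ω, x ⬝ᵥ (M ω) *ᵥ x ∂μ := by
  have hterm : ∀ i j : Fin d, Integrable (fun ω => x i * M ω i j * x j) μ :=
    fun i j => ((hint i j).const_mul (x i)).mul_const (x j)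
  simp_rw [quad_expand, Matrix.of_apply]
  rw [integral_finset_sum _ fun i _ => integrable_finset_sum _ fun j _ => hterm i j]
  refine Finset.sum_congr rfl fun i _ => ?_
  rw [integral_finset_sum _ fun j _ => hterm i j]
  refine Finset.sum_congr rfl fun j _ => ?_
  rw [integral_mul_const, integral_const_mul]

/-- Quadratic form bound via the `L²` operator norm. -/
lemma quad_le_opNorm (M : Matrix (Fin d) (Fin d) ℝ) (y : Fin d → ℝ) :
    y ⬝ᵥ M *ᵥ y ≤ ‖M‖ * (y ⬝ᵥ y) := by
  classical
  set v : EuclideanSpace ℝ (Fin d) := (EuclideanSpace.equiv (Fin d) ℝ).symm y with hv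
  set w : EuclideanSpace ℝ (Fin d) := (EuclideanSpace.equiv (Fin d) ℝ).symm (M *ᵥ y) with hw
  have h1 : y ⬝ᵥ M *ᵥ y = ⟪v, w⟫ := by
    simp [PiLp.inner_apply, RCLike.inner_apply, dotProduct, hv, hw,
      EuclideanSpace.equiv, WithLp.equiv_symm_apply]
    exact Finset.sum_congr rfl fun i _ => mul_comm _ _
  have h2 : ⟪v, w⟫ ≤ ‖v‖ * ‖w‖ := real_inner_le_norm v w
  have h3 : ‖w‖ ≤ ‖M‖ * ‖v‖ := M.l2_opNorm_mulVec v
  have h4 : y ⬝ᵥ y = ‖v‖ * ‖v‖ := by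
    rw [← real_inner_self_eq_norm_mul_norm]
    simp [PiLp.inner_apply, RCLike.inner_apply, dotProduct, hv,
      EuclideanSpace.equiv, WithLp.equiv_symm_apply]
    rw [EuclideanSpace.norm_sq_eq]
    simp [Real.norm_eq_abs, sq_abs, sq]
  rw [h1, h4]
  nlinarith [norm_nonneg v, norm_nonneg w, norm_nonneg M]

end Aux

/-- **Loewner bound for the expectation of an independent sandwich.**
Let `A` and `B` be independent `d × d` real random matrices such that
`A B Aᵀ`, `A Aᵀ` and `B` are (entrywise) integrable, and suppose `B` is symmetric
almost surely.  Then `E[A B Aᵀ] ⪯ ‖E[B]‖₂ • E[A Aᵀ]` in the Loewner order, with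
`E[·]` the entrywise expectation. -/
theorem expectation_sandwich_loewner {d : ℕ} {Ω : Type*} [MeasurableSpace Ω]
    (μ : Measure Ω) [IsProbabilityMeasure μ]
    (A B : Ω → Matrix (Fin d) (Fin d) ℝ)
    (hAmeas : Measurable A) (hBmeas : Measurable B)
    (hindep : IndepFun A B μ)
    (hBsymm : ∀ᵐ ω ∂μ, (B ω)ᵀ = B ω)
    (hBint : ∀ i j, Integrable (fun ω => B ω i j) μ)
    (hAAint : ∀ i j, Integrable (fun ω => (A ω * (A ω)ᵀ) i j) μ)
    (hABAint : ∀ i j, Integrable (fun ω => (A ω * B ω * (A ω)ᵀ) i j) μ) :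
    (‖Matrix.of fun i j => ∫ ω, B ω i j ∂μ‖ •
        (Matrix.of fun i j => ∫ ω, (A ω * (A ω)ᵀ) i j ∂μ) -
      Matrix.of fun i j => ∫ ω, (A ω * B ω * (A ω)ᵀ) i j ∂μ).PosSemidef := by
  classical
  set EB : Matrix (Fin d) (Fin d) ℝ := Matrix.of fun i j => ∫ ω, B ω i j ∂μ with hEB
  set EAA : Matrix (Fin d) (Fin d) ℝ :=
    Matrix.of fun i j => ∫ ω, (A ω * (A ω)ᵀ) i j ∂μ with hEAA
  set EABA : Matrix (Fin d) (Fin d) ℝ :=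
    Matrix.of fun i j => ∫ ω, (A ω * B ω * (A ω)ᵀ) i j ∂μ with hEABA
  -- measurability of entries
  have hAm : ∀ i k : Fin d, Measurable fun ω => A ω i k := fun i k =>
    (measurable_pi_apply k).comp ((measurable_pi_apply i).comp hAmeas)
  -- squares of entries of A are integrable
  have hAsq : ∀ i k : Fin d, Integrable (fun ω => A ω i k * A ω i k) μ := by
    intro i k
    refine (hAAint i i).mono' ((hAm i k).mul (hAm i k)).aestronglyMeasurable ?_
    filter_upwards with ω
    rw [Real.norm_eq_abs, abs_mul_self]
    simp only [Matrix.mul_apply, Matrix.transpose_apply]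
    exact Finset.single_le_sum (f := fun j => A ω i j * A ω i j)
      (fun j _ => mul_self_nonneg _) (Finset.mem_univ k)
  -- products of entries of A are integrable
  have hAprod : ∀ i k j l : Fin d, Integrable (fun ω => A ω i k * A ω j l) μ := by
    intro i k j l
    refine (((hAsq i k).add (hAsq j l)).div_const 2).mono'
      ((hAm i k).mul (hAm j l)).aestronglyMeasurable ?_
    filter_upwards with ω
    simp only [Pi.add_apply, Real.norm_eq_abs]
    have h1 : |A ω i k * A ω j l| = |A ω i k| * |A ω j l| := abs_mul _ _
    nlinarith [sq_nonneg (|A ω i k| - |A ω j l|), abs_mul_abs_self (A ω i k),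
      abs_mul_abs_self (A ω j l), abs_nonneg (A ω i k), abs_nonneg (A ω j l)]
  -- a.e. symmetry of the entries of A B Aᵀ
  have hABAsymm : ∀ᵐ ω ∂μ, ∀ i j : Fin d,
      (A ω * B ω * (A ω)ᵀ) j i = (A ω * B ω * (A ω)ᵀ) i j := by
    filter_upwards [hBsymm] with ω hω i j
    have ht : (A ω * B ω * (A ω)ᵀ)ᵀ = A ω * B ω * (A ω)ᵀ := by
      calc (A ω * B ω * (A ω)ᵀ)ᵀ = (A ω)ᵀᵀ * ((B ω)ᵀ * (A ω)ᵀ) := by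
            rw [Matrix.transpose_mul, Matrix.transpose_mul]
        _ = A ω * B ω * (A ω)ᵀ := by
            rw [hω, Matrix.transpose_transpose, ← mul_assoc]
    have := congrFun (congrFun ht i) j
    simpa [Matrix.transpose_apply] using this
  refine Matrix.posSemidef_iff_dotProduct_mulVec.mpr ⟨?_, ?_⟩
  · -- Hermitian part
    ext i j
    simp only [Matrix.conjTranspose_apply, Matrix.sub_apply, Matrix.smul_apply,
      Matrix.of_apply, star_trivial, smul_eq_mul, hEAA, hEABA]
    have h1 : ∫ ω, (A ω * (A ω)ᵀ) j i ∂μ = ∫ ω, (A ω * (A ω)ᵀ) i j ∂μ := by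
      refine integral_congr_ae (Filter.Eventually.of_forall fun ω => ?_)
      simp only [Matrix.mul_apply, Matrix.transpose_apply]
      exact Finset.sum_congr rfl fun k _ => mul_comm _ _
    have h2 : ∫ ω, (A ω * B ω * (A ω)ᵀ) j i ∂μ = ∫ ω, (A ω * B ω * (A ω)ᵀ) i j ∂μ :=
      integral_congr_ae (hABAsymm.mono fun ω hω => hω i j)
    rw [h1, h2]
  · -- quadratic form part
    intro x
    have hsx : star x = x := star_trivial x
    -- y ω = xᵀ A ω
    set y : Ω → Fin d → ℝ := fun ω k => ∑ i, x i * A ω i k with hy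
    have hyvec : ∀ ω, x ᵥ* A ω = y ω := by
      intro ω; funext k; simp [Matrix.vecMul, dotProduct, hy]
    -- integrability of products of entries of y
    have hyint : ∀ k l : Fin d, Integrable (fun ω => y ω k * y ω l) μ := by
      intro k l
      have he : (fun ω => y ω k * y ω l)
          = fun ω => ∑ i, ∑ j, (x i * x j) * (A ω i k * A ω j l) := by
        funext ω
        rw [hy, Finset.sum_mul_sum]
        exact Finset.sum_congr rfl fun i _ => Finset.sum_congr rfl fun j _ => by ring
      rw [he]
      exact integrable_finset_sum _ fun i _ => integrable_finset_sum _ fun j _ =>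
        (hAprod i k j l).const_mul _
    -- independence of y-products from B entries
    have hindep' : ∀ k l : Fin d,
        IndepFun (fun ω => y ω k * y ω l) (fun ω => B ω k l) μ := by
      intro k l
      have hφ : Measurable fun m : Matrix (Fin d) (Fin d) ℝ =>
          (∑ i, x i * m i k) * (∑ i, x i * m i l) := by
        refine Measurable.mul ?_ ?_
        · exact Finset.measurable_sum _ fun i _ =>
            (show Measurable fun m : Matrix (Fin d) (Fin d) ℝ => m i k from
              (measurable_pi_apply k).comp (measurable_pi_apply i)).const_mul (x i)
        · exact Finset.measurable_sum _ fun i _ =>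
            (show Measurable fun m : Matrix (Fin d) (Fin d) ℝ => m i l from
              (measurable_pi_apply l).comp (measurable_pi_apply i)).const_mul (x i)
      have hψ : Measurable fun m : Matrix (Fin d) (Fin d) ℝ => m k l :=
        (measurable_pi_apply l).comp (measurable_pi_apply k)
      exact hindep.comp hφ hψ
    -- integrable product terms
    have hmul : ∀ k l : Fin d,
        Integrable (fun ω => (y ω k * y ω l) * B ω k l) μ := by
      intro k l
      have := (hindep' k l).integrable_mul (hyint k l) (hBint k l)
      simpa [Pi.mul_def] using this
    -- pointwise expansions
    have hBquad : ∀ ω, y ω ⬝ᵥ B ω *ᵥ y ω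
        = ∑ k, ∑ l, (y ω k * y ω l) * B ω k l := by
      intro ω
      rw [quad_expand]
      exact Finset.sum_congr rfl fun k _ => Finset.sum_congr rfl fun l _ => by ring
    have hEBquad : ∀ ω, y ω ⬝ᵥ EB *ᵥ y ω
        = ∑ k, ∑ l, (y ω k * y ω l) * EB k l := by
      intro ω
      rw [quad_expand]
      exact Finset.sum_congr rfl fun k _ => Finset.sum_congr rfl fun l _ => by ring
    -- sandwich quadratic forms rewritten with y
    have hsand : ∀ ω, x ⬝ᵥ (A ω * B ω * (A ω)ᵀ) *ᵥ x = y ω ⬝ᵥ B ω *ᵥ y ω := by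
      intro ω
      rw [mul_assoc, ← Matrix.mulVec_mulVec, Matrix.dotProduct_mulVec,
        ← Matrix.mulVec_mulVec, Matrix.mulVec_transpose, hyvec]
    have hgram : ∀ ω, x ⬝ᵥ (A ω * (A ω)ᵀ) *ᵥ x = y ω ⬝ᵥ y ω := by
      intro ω
      rw [← Matrix.mulVec_mulVec, Matrix.dotProduct_mulVec, Matrix.mulVec_transpose,
        hyvec]
    -- integral identities
    have hIABA : x ⬝ᵥ EABA *ᵥ x = ∫ ω, y ω ⬝ᵥ B ω *ᵥ y ω ∂μ := by
      rw [hEABA, dot_integral μ _ hABAint x]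
      exact integral_congr_ae (Filter.Eventually.of_forall hsand)
    have hIAA : x ⬝ᵥ EAA *ᵥ x = ∫ ω, y ω ⬝ᵥ y ω ∂μ := by
      rw [hEAA, dot_integral μ _ hAAint x]
      exact integral_congr_ae (Filter.Eventually.of_forall hgram)
    -- swap B for its expectation using independence
    have hswap : ∫ ω, y ω ⬝ᵥ B ω *ᵥ y ω ∂μ = ∫ ω, y ω ⬝ᵥ EB *ᵥ y ω ∂μ := by
      have hLHS : ∫ ω, y ω ⬝ᵥ B ω *ᵥ y ω ∂μ
          = ∑ k, ∑ l, (∫ ω, y ω k * y ω l ∂μ) * (∫ ω, B ω k l ∂μ) := by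
        simp_rw [hBquad]
        rw [integral_finset_sum _ fun k _ => integrable_finset_sum _ fun l _ => hmul k l]
        refine Finset.sum_congr rfl fun k _ => ?_
        rw [integral_finset_sum _ fun l _ => hmul k l]
        refine Finset.sum_congr rfl fun l _ => ?_
        have := (hindep' k l).integral_mul_eq_mul_integral (hyint k l).aestronglyMeasurable
          (hBint k l).aestronglyMeasurable
        simpa [Pi.mul_def] using this
      have hRHS : ∫ ω, y ω ⬝ᵥ EB *ᵥ y ω ∂μ
          = ∑ k, ∑ l, (∫ ω, y ω k * y ω l ∂μ) * (∫ ω, B ω k l ∂μ) := by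
        simp_rw [hEBquad]
        rw [integral_finset_sum _ fun k _ => integrable_finset_sum _ fun l _ =>
          (hyint k l).mul_const (EB k l)]
        refine Finset.sum_congr rfl fun k _ => ?_
        rw [integral_finset_sum _ fun l _ => (hyint k l).mul_const (EB k l)]
        refine Finset.sum_congr rfl fun l _ => ?_
        rw [integral_mul_const]
        rfl
      rw [hLHS, hRHS]
    -- integrability of the two quadratic-form integrands
    have hintEB : Integrable (fun ω => y ω ⬝ᵥ EB *ᵥ y ω) μ := by
      have : (fun ω => y ω ⬝ᵥ EB *ᵥ y ω)
          = fun ω => ∑ k, ∑ l, (y ω k * y ω l) * EB k l := funext hEBquad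
      rw [this]
      exact integrable_finset_sum _ fun k _ => integrable_finset_sum _ fun l _ =>
        (hyint k l).mul_const _
    have hintyy : Integrable (fun ω => y ω ⬝ᵥ y ω) μ := by
      have : (fun ω => y ω ⬝ᵥ y ω) = fun ω => ∑ k, y ω k * y ω k := by
        funext ω; simp [dotProduct]
      rw [this]
      exact integrable_finset_sum _ fun k _ => hyint k k
    -- the key inequality
    have hkey : x ⬝ᵥ EABA *ᵥ x ≤ ‖EB‖ * (x ⬝ᵥ EAA *ᵥ x) := by
      rw [hIABA, hswap, hIAA, ← integral_const_mul]
      exact integral_mono hintEB (hintyy.const_mul _) fun ω => quad_le_opNorm EB (y ω)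
    rw [hsx, Matrix.sub_mulVec, dotProduct_sub, Matrix.smul_mulVec,
      dotProduct_smul, smul_eq_mul]
    exact sub_nonneg.mpr hkey
end
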